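/- arXiv:2403.18798 — 2 statements merged into one kernel-verified Lean document; each statement's English description precedes it below -/
import Mathlib

section
/- If limsup_α P_α(H(K₁) ∩ ⋯ ∩ H(Kₘ)) ≤ P(H(K₁) ∩ ⋯ ∩ H(Kₘ)) holds for every finite collection of non-empty compact sets K₁,…,Kₘ such that P(∂_F H(K_i)) = 0 for all i (boundary in the Fell topology), then it holds for all finite collections of non-empty compact sets, and hence P_α →_w P on (F, τ_uF). -/
open TopologicalSpace MeasureTheory Filter Set
open scoped ENNReal

/-- The hitting set `H(A)` of a subset `A ⊆ E`: all closed sets meeting `A`. -/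
def hitting {E : Type*} [TopologicalSpace E] (A : Set E) : Set (Closeds E) :=
  {F | ((F : Set E) ∩ A).Nonempty}

/-- The missing set `M(A)` of a subset `A ⊆ E`: all closed sets disjoint from `A`. -/
def missing {E : Type*} [TopologicalSpace E] (A : Set E) : Set (Closeds E) :=
  {F | (F : Set E) ∩ A = ∅}

/-- The upper Fell topology on the hyperspace of closed sets. -/
def upperFell (E : Type*) [TopologicalSpace E] : TopologicalSpace (Closeds E) :=
  generateFrom {U | ∃ K : Set E, IsCompact K ∧ U = missing K}

/-- The Fell topology on the hyperspace of closed sets. -/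
def fell (E : Type*) [TopologicalSpace E] : TopologicalSpace (Closeds E) :=
  generateFrom ({U | ∃ K : Set E, IsCompact K ∧ U = missing K} ∪
    {U | ∃ G : Set E, IsOpen G ∧ U = hitting G})

/-- The Borel σ-algebra of the Fell topology (it coincides with that of the
upper Fell topology). -/
def borelFell (E : Type*) [TopologicalSpace E] : MeasurableSpace (Closeds E) :=
  @borel (Closeds E) (fell E)

/-- Weak convergence of a net of (probability) measures with respect to a
topology `t` on the hyperspace: limsup over every `t`-closed set is dominated. -/
def WeakConvTo {E : Type*} [TopologicalSpace E] {ι : Type*} (l : Filter ι)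
    (t : TopologicalSpace (Closeds E))
    (P : ι → @Measure (Closeds E) (borelFell E))
    (Q : @Measure (Closeds E) (borelFell E)) : Prop :=
  ∀ C : Set (Closeds E), @IsClosed _ t C → l.limsup (fun i => P i C) ≤ Q C

/-
Every compact `K` is the decreasing intersection of its closed thickenings `K^{rₙ}`, `rₙ ↓ 0`,
so `H(K) = ⋂ₙ H(K^{rₙ})`. The Fell frontier of `H(K^r)` lies in `H(K^r) \ H(thickening r K)`, and
these differences are pairwise disjoint in `r > 0`, so only countably many of the frontiers carry
`Q`-mass. Choosing the radii outside this countable set, the hypothesis applies to the thickened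
sets, and continuity from above gives the inequality for arbitrary compact sets.

An upper-Fell-closed set `C` is a countable intersection `⋂ H(L)`, with `L` ranging over compact
closures of finite unions of basic open sets; hence it is the decreasing limit of finite
intersections of hitting sets, and continuity from above applies again.
-/

open Function Topology Metric

section Hyperspace

variable {E : Type*} [TopologicalSpace E]

lemma compl_missing (A : Set E) : (missing A)ᶜ = hitting A := by
  ext F
  simp [missing, hitting, ← nonempty_iff_ne_empty]

lemma hitting_mono {A B : Set E} (h : A ⊆ B) : hitting A ⊆ hitting B :=
  fun _ hF => hF.mono (inter_subset_inter_right _ h)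

lemma missing_anti {A B : Set E} (h : A ⊆ B) : missing B ⊆ missing A := by
  simpa only [← compl_missing, compl_subset_compl] using hitting_mono h

lemma missing_union (A B : Set E) : missing (A ∪ B) = missing A ∩ missing B := by
  ext F
  simp only [missing, mem_ofPred_eq, mem_inter_iff, inter_union_distrib_left, union_empty_iff]

lemma hitting_empty : hitting (∅ : Set E) = ∅ := by
  simp [hitting]

lemma isOpen_fell_missing {K : Set E} (hK : IsCompact K) : IsOpen[fell E] (missing K) :=
  .basic _ (.inl ⟨K, hK, rfl⟩)

lemma isOpen_fell_hitting {G : Set E} (hG : IsOpen G) : IsOpen[fell E] (hitting G) :=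
  .basic _ (.inr ⟨G, hG, rfl⟩)

lemma isClosed_fell_hitting {K : Set E} (hK : IsCompact K) : IsClosed[fell E] (hitting K) := by
  rw [← compl_missing]
  exact @IsOpen.isClosed_compl _ (fell E) _ (isOpen_fell_missing hK)

lemma measurableSet_borelFell_of_isOpen {U : Set (Closeds E)} (hU : IsOpen[fell E] U) :
    MeasurableSet[borelFell E] U :=
  MeasurableSpace.measurableSet_generateFrom hU

lemma measurableSet_borelFell_of_isClosed {C : Set (Closeds E)} (hC : IsClosed[fell E] C) :
    MeasurableSet[borelFell E] C :=
  (measurableSet_borelFell_of_isOpen (@IsClosed.isOpen_compl _ (fell E) _ hC)).of_compl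

lemma measurableSet_hitting {K : Set E} (hK : IsCompact K) :
    MeasurableSet[borelFell E] (hitting K) :=
  measurableSet_borelFell_of_isClosed (isClosed_fell_hitting hK)

lemma frontier_fell_hitting_subset {K G : Set E} (hK : IsCompact K) (hG : IsOpen G)
    (hGK : G ⊆ K) : @frontier _ (fell E) (hitting K) ⊆ hitting K \ hitting G := by
  unfold frontier
  rw [@IsClosed.closure_eq _ (fell E) _ (isClosed_fell_hitting hK)]
  exact sdiff_subset_sdiff_right
    (@interior_maximal _ (fell E) _ _ (hitting_mono hGK) (isOpen_fell_hitting hG))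

lemma hitting_iInter_of_directed [T2Space E] {κ : Type*} [Nonempty κ] {K : κ → Set E}
    (hd : Directed (· ⊇ ·) K) (hK : ∀ i, IsCompact (K i)) :
    hitting (⋂ i, K i) = ⋂ i, hitting (K i) := by
  refine (subset_iInter fun i => hitting_mono (iInter_subset K i)).antisymm fun F hF => ?_
  have := IsCompact.nonempty_iInter_of_directed_nonempty_isCompact_isClosed
    (fun i => (F : Set E) ∩ K i)
    (hd.mono_comp _ fun _ _ h => inter_subset_inter_right _ h) (mem_iInter.1 hF)
    (fun i => (hK i).inter_left F.isClosed) (fun i => F.isClosed.inter (hK i).isClosed)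
  rwa [← inter_iInter] at this

end Hyperspace

section Limsup

variable {α ι κ : Type*} {m : MeasurableSpace α} {l : Filter ι} {P : ι → Measure α}
  {Q : Measure α} [IsFiniteMeasure Q]

lemma limsup_measure_iInter_le_of_directed [Countable κ] [Nonempty κ] {s : κ → Set α}
    (hs : ∀ k, MeasurableSet (s k)) (hd : Directed (· ⊇ ·) s)
    (h : ∀ k, l.limsup (fun a => P a (s k)) ≤ Q (s k)) :
    l.limsup (fun a => P a (⋂ k, s k)) ≤ Q (⋂ k, s k) :=
  calc l.limsup (fun a => P a (⋂ k, s k))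
      ≤ ⨅ k, Q (s k) := le_iInf fun k =>
        (limsup_le_limsup (.of_forall fun a => measure_mono (iInter_subset s k))).trans (h k)
    _ = Q (⋂ k, s k) := (hd.measure_iInter (fun k => (hs k).nullMeasurableSet)
        ⟨Classical.arbitrary κ, measure_ne_top Q _⟩).symm

lemma limsup_measure_iInter_le_of_forall_finset [Countable κ] {s : κ → Set α}
    (hs : ∀ k, MeasurableSet (s k))
    (h : ∀ t : Finset κ, l.limsup (fun a => P a (⋂ k ∈ t, s k)) ≤ Q (⋂ k ∈ t, s k)) :
    l.limsup (fun a => P a (⋂ k, s k)) ≤ Q (⋂ k, s k) := by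
  classical
  rw [iInter_eq_iInter_finset]
  exact limsup_measure_iInter_le_of_directed (fun t => t.measurableSet_biInter fun k _ => hs k)
    (Antitone.directed_ge fun _ _ h => biInter_subset_biInter_left h) h

end Limsup

section Thickening

variable {E : Type*} [MetricSpace E] {ι : Type*} {l : Filter ι}
  {P : ι → @Measure (Closeds E) (borelFell E)} {Q : @Measure (Closeds E) (borelFell E)}

lemma countable_setOf_measure_frontier_hitting_cthickening_pos [IsFiniteMeasure Q] {K : Set E}
    {δ : ℝ} (hδ : IsCompact (cthickening δ K)) :
    {r ∈ Ioo 0 δ | 0 < Q (@frontier _ (fell E) (hitting (cthickening r K)))}.Countable := by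
  let D : Ioo 0 δ → Set (Closeds E) := fun r => @frontier _ (fell E) (hitting (cthickening r K))
  have hD : ∀ r : Ioo 0 δ, D r ⊆ hitting (cthickening r K) \ hitting (thickening r K) :=
    fun r => frontier_fell_hitting_subset
      (hδ.of_isClosed_subset isClosed_cthickening (cthickening_mono r.2.2.le K))
      isOpen_thickening (thickening_subset_cthickening _ _)
  have hdisj : Pairwise (Disjoint on D) := by
    refine (pairwise_disjoint_on D).2 fun r r' hrr' => disjoint_left.2 fun F hF hF' => ?_
    exact (hD r' hF').2
      (hitting_mono (cthickening_subset_thickening' r'.2.1 hrr' K) (hD r hF).1)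
  have hcount := Measure.countable_meas_pos_of_disjoint_iUnion (μ := Q)
    (fun r => measurableSet_borelFell_of_isClosed (@isClosed_frontier _ (fell E) _)) hdisj
  refine (hcount.image Subtype.val).mono ?_
  rintro r ⟨hr, hpos⟩
  exact ⟨⟨r, hr⟩, hpos, rfl⟩

lemma hitting_eq_iInter_hitting_cthickening {K : Set E} (hK : IsClosed K) {r : ℕ → ℝ}
    (hr : Antitone r) (hr_pos : ∀ n, 0 < r n) (hr_lim : Tendsto r atTop (𝓝 0))
    (hc : ∀ n, IsCompact (cthickening (r n) K)) :
    hitting K = ⋂ n, hitting (cthickening (r n) K) := by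
  have hr_small : ∀ ε, 0 < ε → (range r ∩ Ioc 0 ε).Nonempty := fun ε hε =>
    let ⟨n, hn⟩ := (hr_lim.eventually (gt_mem_nhds hε)).exists
    ⟨r n, mem_range_self n, hr_pos n, hn.le⟩
  rw [← hitting_iInter_of_directed (Antitone.directed_ge fun _ _ h => cthickening_mono (hr h) K)
    hc, ← biInter_range (f := r) (g := fun δ => cthickening δ K),
    ← closure_eq_iInter_cthickening' K _ hr_small, hK.closure_eq]

theorem limsup_measure_iInter_hitting_le_of_null_frontier [LocallyCompactSpace E]
    [IsFiniteMeasure Q] {κ : Type*} [Finite κ]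
    (h : ∀ K : κ → Set E, (∀ i, IsCompact (K i)) → (∀ i, (K i).Nonempty) →
      (∀ i, Q (@frontier _ (fell E) (hitting (K i))) = 0) →
      l.limsup (fun a => P a (⋂ j, hitting (K j))) ≤ Q (⋂ j, hitting (K j)))
    {K : κ → Set E} (hK : ∀ i, IsCompact (K i)) :
    l.limsup (fun a => P a (⋂ j, hitting (K j))) ≤ Q (⋂ j, hitting (K j)) := by
  by_cases hne : ∀ j, (K j).Nonempty
  swap
  · obtain ⟨j, hj⟩ := not_forall.1 hne
    have hempty : (⋂ j, hitting (K j)) = ∅ := eq_empty_of_subset_empty <|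
      (iInter_subset _ j).trans (by rw [not_nonempty_iff_eq_empty.1 hj, hitting_empty])
    simp only [hempty, measure_empty, ← ENNReal.bot_eq_zero, limsup_const_bot, le_refl]
  obtain ⟨δ, hδ, hδK⟩ := (isCompact_iUnion hK).exists_isCompact_cthickening
  have hδKj : ∀ j, IsCompact (cthickening δ (K j)) := fun j =>
    hδK.of_isClosed_subset isClosed_cthickening
      (cthickening_subset_of_subset δ (subset_iUnion K j))
  have hbad := countable_iUnion fun j =>
    countable_setOf_measure_frontier_hitting_cthickening_pos (Q := Q) (hδKj j)
  obtain ⟨r, hr_anti, hr_mem, hr_lim⟩ :=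
    (hbad.dense_compl ℝ).exists_seq_strictAnti_tendsto_of_lt hδ
  have hr_cpt : ∀ n j, IsCompact (cthickening (r n) (K j)) := fun n j =>
    (hδKj j).of_isClosed_subset isClosed_cthickening (cthickening_mono (hr_mem n).1.2.le _)
  have hr_null : ∀ n j, Q (@frontier _ (fell E) (hitting (cthickening (r n) (K j)))) = 0 :=
    fun n j => nonpos_iff_eq_zero.1 <| not_lt.1 fun hpos =>
      (hr_mem n).2 (mem_iUnion.2 ⟨j, (hr_mem n).1, hpos⟩)
  have hK_eq : (⋂ j, hitting (K j)) = ⋂ n, ⋂ j, hitting (cthickening (r n) (K j)) := by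
    rw [iInter_comm]
    exact iInter_congr fun j => hitting_eq_iInter_hitting_cthickening (hK j).isClosed
      hr_anti.antitone (fun n => (hr_mem n).1.1) hr_lim (hr_cpt · j)
  rw [hK_eq]
  exact limsup_measure_iInter_le_of_directed
    (fun n => .iInter fun j => measurableSet_hitting (hr_cpt n j))
    (Antitone.directed_ge fun m n hmn => iInter_mono fun j =>
      hitting_mono (cthickening_mono (hr_anti.antitone hmn) _))
    fun n => h _ (hr_cpt n) (fun j => (hne j).mono (self_subset_cthickening _)) (hr_null n)

end Thickening

section UpperFell

variable {E : Type*} [TopologicalSpace E]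

lemma exists_isCompact_mem_missing_subset {U : Set (Closeds E)} (hU : IsOpen[upperFell E] U)
    {F : Closeds E} (hF : F ∈ U) :
    ∃ K, IsCompact K ∧ F ∈ missing K ∧ missing K ⊆ U := by
  induction hU generalizing F with
  | basic U hU =>
    obtain ⟨K, hK, rfl⟩ := hU
    exact ⟨K, hK, hF, subset_rfl⟩
  | univ => exact ⟨∅, isCompact_empty, by simp [missing], subset_univ _⟩
  | inter U V _ _ ihU ihV =>
    obtain ⟨K, hK, hFK, hKU⟩ := ihU hF.1
    obtain ⟨L, hL, hFL, hLV⟩ := ihV hF.2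
    exact ⟨K ∪ L, hK.union hL, missing_union K L ▸ ⟨hFK, hFL⟩,
      missing_union K L ▸ inter_subset_inter hKU hLV⟩
  | sUnion S _ ih =>
    obtain ⟨U, hUS, hFU⟩ := hF
    obtain ⟨K, hK, hFK, hKU⟩ := ih U hUS hFU
    exact ⟨K, hK, hFK, hKU.trans (subset_sUnion_of_mem hUS)⟩

variable [SecondCountableTopology E]

def basisCompacts (E : Type*) [TopologicalSpace E] [SecondCountableTopology E] : Set (Set E) :=
  {L | IsCompact L ∧ ∃ s ⊆ countableBasis E, s.Finite ∧ L = closure (⋃₀ s)}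

lemma countable_basisCompacts : (basisCompacts E).Countable := by
  refine ((countable_ofPred_finite_subset (countable_countableBasis E)).image
    fun s => closure (⋃₀ s)).mono ?_
  rintro L ⟨-, s, hsB, hs, rfl⟩
  exact ⟨s, ⟨hs, hsB⟩, rfl⟩

lemma exists_basisCompacts_between [LocallyCompactSpace E] [T2Space E] {K U : Set E}
    (hK : IsCompact K) (hU : IsOpen U) (hKU : K ⊆ U) :
    ∃ L ∈ basisCompacts E, K ⊆ L ∧ L ⊆ U := by
  obtain ⟨M, hM, hKM, hMU⟩ := exists_compact_between hK hU hKU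
  have hB := isBasis_countableBasis E
  obtain ⟨s, hsB, hs, hKs⟩ := hK.elim_finite_subcover_image
    (b := {V | V ∈ countableBasis E ∧ V ⊆ interior M}) (c := fun V => V)
    (fun V hV => hB.isOpen hV.1)
    (by rwa [← sUnion_eq_biUnion, ← hB.open_eq_sUnion' isOpen_interior])
  have hsM : closure (⋃₀ s) ⊆ M :=
    closure_minimal (sUnion_subset fun V hV => (hsB hV).2.trans interior_subset) hM.isClosed
  refine ⟨closure (⋃₀ s), ⟨hM.of_isClosed_subset isClosed_closure hsM, s,
    fun V hV => (hsB hV).1, hs, rfl⟩, ?_, hsM.trans hMU⟩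
  rw [← sUnion_eq_biUnion] at hKs
  exact hKs.trans subset_closure

lemma exists_countable_eq_biInter_hitting [LocallyCompactSpace E] [T2Space E]
    {C : Set (Closeds E)} (hC : IsClosed[upperFell E] C) :
    ∃ T : Set (Set E), T.Countable ∧ (∀ L ∈ T, IsCompact L) ∧ C = ⋂ L ∈ T, hitting L := by
  refine ⟨{L ∈ basisCompacts E | missing L ⊆ Cᶜ},
    countable_basisCompacts.mono fun _ hL => hL.1, fun L hL => hL.1.1,
    (subset_iInter₂ fun L hL F hFC => ?_).antisymm fun F hF => ?_⟩
  · rw [← compl_missing]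
    exact fun hFL => hL.2 hFL hFC
  · by_contra hFC
    obtain ⟨K, hK, hFK, hKC⟩ :=
      exists_isCompact_mem_missing_subset (@IsClosed.isOpen_compl _ (upperFell E) _ hC) hFC
    obtain ⟨L, hL, hKL, hLF⟩ := exists_basisCompacts_between hK F.isClosed.isOpen_compl
      (subset_compl_iff_disjoint_left.2 (disjoint_iff_inter_eq_empty.2 hFK))
    have hFL : F ∈ missing L :=
      disjoint_iff_inter_eq_empty.1 (subset_compl_iff_disjoint_left.1 hLF)
    exact mem_iInter₂.1 hF L ⟨hL, (missing_anti hKL).trans hKC⟩ |>.ne_empty hFL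

end UpperFell

section WeakConvergence

variable {E : Type*} [TopologicalSpace E] {ι : Type*} {l : Filter ι}
  {P : ι → @Measure (Closeds E) (borelFell E)} {Q : @Measure (Closeds E) (borelFell E)}

lemma limsup_measure_iInter_hitting_le_of_fin
    (h : ∀ (m : ℕ) (K : Fin m → Set E), (∀ i, IsCompact (K i)) →
      l.limsup (fun a => P a (⋂ j, hitting (K j))) ≤ Q (⋂ j, hitting (K j)))
    {κ : Type*} [Finite κ] {K : κ → Set E} (hK : ∀ i, IsCompact (K i)) :
    l.limsup (fun a => P a (⋂ j, hitting (K j))) ≤ Q (⋂ j, hitting (K j)) := by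
  obtain ⟨m, ⟨e⟩⟩ := Finite.exists_equiv_fin κ
  simpa only [comp_apply, e.symm.surjective.iInter_comp fun j => hitting (K j)] using
    h m (K ∘ e.symm) fun i => hK _

theorem weakConvTo_upperFell_of_limsup_iInter_hitting_le [LocallyCompactSpace E]
    [SecondCountableTopology E] [T2Space E] [IsFiniteMeasure Q]
    (h : ∀ (m : ℕ) (K : Fin m → Set E), (∀ i, IsCompact (K i)) →
      l.limsup (fun a => P a (⋂ j, hitting (K j))) ≤ Q (⋂ j, hitting (K j))) :
    WeakConvTo l (upperFell E) P Q := by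
  intro C hC
  obtain ⟨T, hT, hTK, rfl⟩ := exists_countable_eq_biInter_hitting hC
  have := hT.to_subtype
  rw [biInter_eq_iInter]
  refine limsup_measure_iInter_le_of_forall_finset
    (fun L => measurableSet_hitting (hTK L L.2)) fun t => ?_
  rw [← Finset.set_biInter_coe, biInter_eq_iInter]
  exact limsup_measure_iInter_hitting_le_of_fin h fun L => hTK L.1 L.1.2

end WeakConvergence

theorem stmt_4_general {E : Type*} [TopologicalSpace E] [LocallyCompactSpace E]
    [SecondCountableTopology E] [T2Space E] {ι : Type*} (l : Filter ι)
    (P : ι → @Measure (Closeds E) (borelFell E)) (Q : @Measure (Closeds E) (borelFell E))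
    (hQ : IsProbabilityMeasure Q)
    (h : ∀ (m : ℕ) (K : Fin m → Set E), (∀ i, IsCompact (K i)) → (∀ i, (K i).Nonempty) →
      (∀ i, Q (@frontier _ (fell E) (hitting (K i))) = 0) →
      l.limsup (fun a => P a (⋂ j, hitting (K j))) ≤ Q (⋂ j, hitting (K j))) :
    (∀ (m : ℕ) (K : Fin m → Set E), (∀ i, IsCompact (K i)) → (∀ i, (K i).Nonempty) →
      l.limsup (fun a => P a (⋂ j, hitting (K j))) ≤ Q (⋂ j, hitting (K j))) ∧
    WeakConvTo l (upperFell E) P Q := by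
  have hall : ∀ (m : ℕ) (K : Fin m → Set E), (∀ i, IsCompact (K i)) →
      l.limsup (fun a => P a (⋂ j, hitting (K j))) ≤ Q (⋂ j, hitting (K j)) := by
    let _ : MetricSpace E := TopologicalSpace.metrizableSpaceMetric E
    exact fun m K hK => limsup_measure_iInter_hitting_le_of_null_frontier (h m) hK
  exact ⟨fun m K hK _ => hall m K hK, weakConvTo_upperFell_of_limsup_iInter_hitting_le hall⟩

/-- if the limsup inequality over finite intersections of hitting
sets holds whenever all the compact sets have `Q`-null Fell-boundary of their
hitting sets, then it holds for all finite collections of non-empty compact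
sets, and hence `P_α →_w Q` on `(F, τ_uF)`. -/
theorem stmt_4 {E : Type*} [TopologicalSpace E] [LocallyCompactSpace E]
    [SecondCountableTopology E] [T2Space E] {ι : Type*} (l : Filter ι) [l.NeBot]
    (P : ι → @Measure (Closeds E) (borelFell E)) (Q : @Measure (Closeds E) (borelFell E))
    (hP : ∀ i, IsProbabilityMeasure (P i)) (hQ : IsProbabilityMeasure Q)
    (h : ∀ (m : ℕ) (K : Fin m → Set E), (∀ i, IsCompact (K i)) → (∀ i, (K i).Nonempty) →
      (∀ i, Q (@frontier _ (fell E) (hitting (K i))) = 0) →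
      l.limsup (fun a => P a (⋂ j, hitting (K j))) ≤ Q (⋂ j, hitting (K j))) :
    (∀ (m : ℕ) (K : Fin m → Set E), (∀ i, IsCompact (K i)) → (∀ i, (K i).Nonempty) →
      l.limsup (fun a => P a (⋂ j, hitting (K j))) ≤ Q (⋂ j, hitting (K j))) ∧
    WeakConvTo l (upperFell E) P Q :=
  stmt_4_general l P Q hQ h
end

section
/- The space of probability measures on the hyperspace (F, τ_uF) equipped with the weak topology is compact; moreover it is not Hausdorff whenever E is non-empty, since every net converges to δ_E and also to any measure dominating a given limit. -/
/-!
The whole space `E` (the top element of `Closeds E`) lies in no proper `τ_uF`-open set, since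
the only compact set it misses is `∅`. Hence `δ_E(O) ≤ μ(O)` for every open `O` and every
probability measure `μ`, which in the right-order topology means that every `μ` specializes
to `δ_E`: the only neighbourhood of `δ_E` is the whole space. A space with such a point is
compact, and it is not T₁ as soon as it has a second point, here `δ_∅`, which differs from
`δ_E` on the open set `M({e})`.
-/

open TopologicalSpace MeasureTheory Filter Set
open scoped ENNReal

/-- The right-order topology on `ℝ`, generated by the rays `(a, ∞)`. -/
def rightOrderTop : TopologicalSpace ℝ :=
  generateFrom {s : Set ℝ | ∃ a : ℝ, s = Ioi a}

/-- The space of Borel probability measures on the hyperspace of closed sets. -/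
def ProbUF (E : Type*) [TopologicalSpace E] : Type _ :=
  {μ : @Measure (Closeds E) (borelFell E) // IsProbabilityMeasure μ}

/-- The weak topology on `ProbUF E`: the initial topology with respect to the
evaluation maps at `τ_uF`-open sets, into `ℝ` with the right-order topology. -/
def weakTopUF (E : Type*) [TopologicalSpace E] : TopologicalSpace (ProbUF E) :=
  ⨅ O : {s : Set (Closeds E) // @IsOpen _ (upperFell E) s},
    TopologicalSpace.induced (fun μ : ProbUF E => (μ.1 O.1).toReal) rightOrderTop

open Topology

section Specialization

variable {X : Type*} [TopologicalSpace X]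

lemma nhds_eq_top_iff_forall_specializes {x : X} : 𝓝 x = ⊤ ↔ ∀ y, y ⤳ x :=
  ⟨fun h _ => specializes_iff_nhds.2 (h ▸ le_top), fun h =>
    top_unique fun _ hs => mem_top.2 <| eq_univ_of_forall fun y => (h y).pure_le_nhds hs⟩

lemma compactSpace_of_forall_specializes {x : X} (h : ∀ y, y ⤳ x) : CompactSpace X :=
  ⟨isCompact_iff_ultrafilter_le_nhds.2 fun _ _ =>
    ⟨x, mem_univ x, (nhds_eq_top_iff_forall_specializes.2 h).symm ▸ le_top⟩⟩

lemma dirac_le_of_forall_specializes [MeasurableSpace X] {x : X} (h : ∀ y, y ⤳ x)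
    (μ : Measure X) [IsProbabilityMeasure μ] {O : Set X} (hO : IsOpen O)
    (hOm : MeasurableSet O) : Measure.dirac x O ≤ μ O := by
  by_cases hx : x ∈ O
  · have hO_univ : O = univ := eq_univ_of_forall fun y => (h y).mem_open hO hx
    simp [hO_univ]
  · simp [Measure.dirac_apply' x hOm, hx]

end Specialization

lemma specializes_iInf_induced {X ι Y : Type*} {t : TopologicalSpace Y} {f : ι → X → Y} {x y : X}
    (h : ∀ i, @Specializes Y t (f i x) (f i y)) :
    @Specializes X (⨅ i, t.induced (f i)) x y := by
  simp only [specializes_iff_nhds, nhds_iInf, nhds_induced] at h ⊢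
  exact iInf_mono fun i => comap_mono (h i)

lemma rightOrderTop_eq_upper : rightOrderTop = Topology.upper ℝ := by
  simp only [rightOrderTop, Topology.upper, compl_Iic, eq_comm]

lemma specializes_rightOrderTop_of_le {a b : ℝ} (hab : a ≤ b) : @Specializes ℝ rightOrderTop b a := by
  let _ := rightOrderTop
  have : Topology.IsUpper ℝ := ⟨rightOrderTop_eq_upper⟩
  rwa [specializes_iff_mem_closure, Topology.IsUpper.closure_singleton]

section Hyperspace

variable {E : Type*} [TopologicalSpace E]

lemma fell_le_upperFell : fell E ≤ upperFell E :=
  generateFrom_anti subset_union_left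

lemma measurableSet_of_isOpen_upperFell {O : Set (Closeds E)} (hO : IsOpen[upperFell E] O) :
    MeasurableSet[borelFell E] O :=
  MeasurableSpace.measurableSet_generateFrom (fell_le_upperFell O hO)

lemma nhds_top_upperFell : @nhds _ (upperFell E) ⊤ = ⊤ := by
  rw [upperFell, nhds_generateFrom]
  refine iInf₂_eq_top.2 fun s ⟨hs, K, _, hsK⟩ => ?_
  subst hsK
  have hK : K = ∅ := by simpa [missing] using hs
  simp [hK, missing]

end Hyperspace

namespace ProbUF

variable {E : Type*} [TopologicalSpace E]

noncomputable def dirac (F : Closeds E) : ProbUF E :=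
  ⟨@Measure.dirac _ (borelFell E) F, @Measure.dirac.isProbabilityMeasure _ (borelFell E) F⟩

lemma specializes_dirac_top (μ : ProbUF E) : @Specializes _ (weakTopUF E) μ (dirac ⊤) := by
  let _ := upperFell E
  let _ := borelFell E
  have hμ := μ.2
  refine specializes_iInf_induced fun O => specializes_rightOrderTop_of_le ?_
  refine ENNReal.toReal_mono (measure_ne_top _ _) ?_
  exact dirac_le_of_forall_specializes (nhds_eq_top_iff_forall_specializes.1 nhds_top_upperFell)
    μ.1 O.2 (measurableSet_of_isOpen_upperFell O.2)

lemma dirac_top_ne_dirac_bot [Nonempty E] : dirac (⊤ : Closeds E) ≠ dirac ⊥ := by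
  let _ := borelFell E
  obtain ⟨e⟩ := ‹Nonempty E›
  have hm : MeasurableSet (missing {e} : Set (Closeds E)) :=
    measurableSet_of_isOpen_upperFell (GenerateOpen.basic _ ⟨{e}, isCompact_singleton, rfl⟩)
  intro h
  have h_eval := congrArg (fun μ : ProbUF E => μ.1 (missing {e})) h
  have h_top : (⊤ : Closeds E) ∉ missing {e} := by simp [missing, -SetLike.mem_coe]
  have h_bot : (⊥ : Closeds E) ∈ missing {e} := by simp [missing, -SetLike.mem_coe]
  simp only [dirac, Measure.dirac_apply' _ hm, indicator_of_notMem h_top,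
    indicator_of_mem h_bot] at h_eval
  exact zero_ne_one h_eval

end ProbUF

theorem stmt_19_general {E : Type*} [TopologicalSpace E] :
    @CompactSpace (ProbUF E) (weakTopUF E) ∧
    (Nonempty E → ¬ @T2Space (ProbUF E) (weakTopUF E)) := by
  let _ := weakTopUF E
  refine ⟨compactSpace_of_forall_specializes (ProbUF.specializes_dirac_top (E := E)),
    fun _ _ => ?_⟩
  exact ProbUF.dirac_top_ne_dirac_bot (E := E) (ProbUF.specializes_dirac_top _).eq.symm

/-- the space of probability measures on `(F, τ_uF)` with the
weak topology is compact, and it is not Hausdorff whenever `E` is non-empty. -/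
theorem stmt_19 {E : Type*} [TopologicalSpace E] [LocallyCompactSpace E]
    [SecondCountableTopology E] [T2Space E] :
    @CompactSpace (ProbUF E) (weakTopUF E) ∧
    (Nonempty E → ¬ @T2Space (ProbUF E) (weakTopUF E)) :=
  stmt_19_general
end
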